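/- arXiv:math/0503576 — 2 statements merged into one kernel-verified Lean document; each statement's English description precedes it below -/
import Mathlib

section
/- Let d ≥ 2 and p > p_c(d). For every bounded measurable f : Ω → ℝ and every unit coordinate vector e, 𝔼_0(f∘τ_e · 1_{ω_e=1}) = 𝔼_0(f · 1_{ω_{−e}=1}), where −e denotes the edge from the origin opposite to e. Consequently, for all bounded measurable f, g : Ω → ℝ one has 𝔼_0(f · Qg) = 𝔼_0(g · Qf); in particular, ℙ_0 is reversible and hence stationary for the Markov kernel Q(ω,A) = (1/(2d)) Σ_{|e|=1} [1_{ω_e=1} 1_{τ_e ω ∈ A} + 1_{ω_e=0} 1_{ω ∈ A}]. -/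
open MeasureTheory ProbabilityTheory Filter Topology

noncomputable section

namespace QIP

abbrev Site (d : ℕ) := Fin d → ℤ
abbrev Edge (d : ℕ) := Site d × Fin d
abbrev Config (d : ℕ) := Edge d → Bool

/-- The unit coordinate vector in direction `i`. -/
def unitVec (d : ℕ) (i : Fin d) : Site d := Pi.single i 1

/-- The 2d unit vectors: `(i, true)` is `+e_i`, `(i, false)` is `-e_i`. -/
def dirVec (d : ℕ) (u : Fin d × Bool) : Site d :=
  if u.2 then unitVec d u.1 else -unitVec d u.1

/-- The edge incident to `x` in direction `u`. -/
def edgeAt (d : ℕ) (x : Site d) (u : Fin d × Bool) : Edge d :=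
  if u.2 then (x, u.1) else (x - unitVec d u.1, u.1)

/-- The edge incident to `x` in direction `u` is occupied in `ω`. -/
def occStep (d : ℕ) (ω : Config d) (x : Site d) (u : Fin d × Bool) : Prop :=
  ω (edgeAt d x u) = true

instance (d : ℕ) (ω : Config d) (x : Site d) (u : Fin d × Bool) :
    Decidable (occStep d ω x u) := by unfold occStep; infer_instance

/-- The shift `τ_x` on configurations: `(τ_x ω)_b = ω_{x+b}`. -/
def shift (d : ℕ) (x : Site d) (ω : Config d) : Config d :=
  fun e => ω (x + e.1, e.2)

/-- `y` is a neighbour of `x` joined to it by an occupied edge. -/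
def occAdj (d : ℕ) (ω : Config d) (x y : Site d) : Prop :=
  ∃ u : Fin d × Bool, y = x + dirVec d u ∧ occStep d ω x u

/-- The occupied cluster of `x`. -/
def cluster (d : ℕ) (ω : Config d) (x : Site d) : Set (Site d) :=
  {y | Relation.ReflTransGen (occAdj d ω) x y}

/-- `x` belongs to an infinite occupied cluster. -/
def inInfCluster (d : ℕ) (ω : Config d) (x : Site d) : Prop :=
  (cluster d ω x).Infinite

/-- The event that the origin lies in an infinite cluster. -/
def Omega0 (d : ℕ) : Set (Config d) := {ω | inInfCluster d ω 0}

/-- `μ` is i.i.d. Bernoulli(p) bond percolation on `ℤ^d`. -/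
def IsBernoulli (d : ℕ) (p : ℝ) (μ : Measure (Config d)) : Prop :=
  IsProbabilityMeasure μ ∧
  ∀ (s : Finset (Edge d)) (f : Edge d → Bool),
    μ {ω | ∀ e ∈ s, ω e = f e}
      = ∏ e ∈ s, (if f e then ENNReal.ofReal p else ENNReal.ofReal (1 - p))

/-- The critical probability `p_c(d)`. -/
def pc (d : ℕ) : ℝ :=
  sInf {p : ℝ | ∃ μ : Measure (Config d), IsBernoulli d p μ ∧ 0 < μ (Omega0 d)}

/-- The conditional measure `ℙ_0 = ℙ(·|0 ∈ C∞)`. -/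
def P0 (d : ℕ) (μ : Measure (Config d)) : Measure (Config d) :=
  ProbabilityTheory.cond μ (Omega0 d)

open Classical in
/-- Transition probabilities of the lazy walk on the cluster. -/
def transP (d : ℕ) (ω : Config d) (x y : Site d) : ℝ :=
  (1 / (2 * (d : ℝ))) * ∑ u : Fin d × Bool,
    (if (y = x + dirVec d u ∧ occStep d ω x u) ∨ (y = x ∧ ¬ occStep d ω x u) then 1 else 0)

/-- `P` is the law of the lazy simple random walk on `C∞(ω)` started at `0`. -/
def IsWalkLaw (d : ℕ) (ω : Config d) (P : Measure (ℕ → Site d)) : Prop :=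
  IsProbabilityMeasure P ∧
  ∀ (n : ℕ) (x : ℕ → Site d),
    P {X | ∀ k ≤ n, X k = x k}
      = ENNReal.ofReal ((if x 0 = 0 then (1:ℝ) else 0) *
          ∏ k ∈ Finset.range n, transP d ω (x k) (x (k+1)))

open Classical in
/-- The Markov operator `Q` of the environment chain (acting componentwise). -/
def Qop {E : Type*} [AddCommMonoid E] [Module ℝ E] (d : ℕ)
    (f : Config d → E) (ω : Config d) : E :=
  (1 / (2 * (d : ℝ))) • ∑ u : Fin d × Bool,
    (if occStep d ω 0 u then f (shift d (dirVec d u) ω) else f ω)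

/-- Embedding of `ℤ^d` into `ℝ^d`. -/
def toR (d : ℕ) (x : Site d) : Fin d → ℝ := fun j => (x j : ℝ)

open Classical in
/-- The local drift `V` at the origin. -/
def Vdrift (d : ℕ) (ω : Config d) : Fin d → ℝ :=
  (1 / (2 * (d : ℝ))) • ∑ u : Fin d × Bool,
    (if occStep d ω 0 u then toR d (dirVec d u) else 0)

/-- Squared Euclidean norm on `ℝ^d`. -/
def norm2 (d : ℕ) (v : Fin d → ℝ) : ℝ := ∑ j, (v j) ^ 2

/-- Euclidean norm on `ℝ^d`. -/
def eucNorm (d : ℕ) (v : Fin d → ℝ) : ℝ := Real.sqrt (norm2 d v)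

/-- `ψ` is a solution of `(1 + ε - Q) ψ = V` in `L²(μ; ℝ^d)`. -/
def IsPsiSol (d : ℕ) (μ : Measure (Config d)) (ε : ℝ)
    (ψ : Config d → Fin d → ℝ) : Prop :=
  Measurable ψ ∧ MemLp ψ 2 μ ∧
  ∀ᵐ ω ∂μ, (1 + ε) • ψ ω - Qop d ψ ω = Vdrift d ω

open Classical in
/-- `χ` is the corrector: the `L²(ℙ_0)`-limit of `1_{x ∈ C∞} (ψ_ε ∘ τ_x - ψ_ε)` as `ε ↓ 0`. -/
def IsCorrector (d : ℕ) (μ : Measure (Config d))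
    (χ : Site d → Config d → Fin d → ℝ) : Prop :=
  ∀ (x : Site d) (ψ : ℝ → Config d → Fin d → ℝ),
    (∀ ε > 0, IsPsiSol d μ ε (ψ ε)) →
    Tendsto (fun ε => ∫ ω, norm2 d
        ((fun j => if inInfCluster d ω x then ψ ε (shift d x ω) j - ψ ε ω j else 0)
          - χ x ω) ∂μ)
      (𝓝[>] (0:ℝ)) (𝓝 0)


/-! ### Auxiliary development -/

set_option synthInstance.maxHeartbeats 1000000
set_option maxHeartbeats 1000000

section Aux

variable {d : ℕ}

lemma shift_shift (x y : Site d) (ω : Config d) :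
    shift d x (shift d y ω) = shift d (y + x) ω := by
  funext e; simp [shift, add_assoc]

lemma shift_zero (ω : Config d) : shift d 0 ω = ω := by
  funext e; simp [shift]

lemma shift_edgeAt (x y : Site d) (ω : Config d) (u : Fin d × Bool) :
    shift d x ω (edgeAt d y u) = ω (edgeAt d (x + y) u) := by
  rcases u with ⟨i, b⟩
  cases b <;> simp [shift, edgeAt, add_sub_assoc]

lemma occStep_shift (x y : Site d) (ω : Config d) (u : Fin d × Bool) :
    occStep d (shift d x ω) y u ↔ occStep d ω (x + y) u := by
  unfold occStep; rw [shift_edgeAt]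

lemma dirVec_not (u : Fin d × Bool) : dirVec d (u.1, !u.2) = -dirVec d u := by
  rcases u with ⟨i, b⟩; cases b <;> simp [dirVec]

lemma edgeAt_rev (x : Site d) (u : Fin d × Bool) :
    edgeAt d (x + dirVec d u) (u.1, !u.2) = edgeAt d x u := by
  rcases u with ⟨i, b⟩
  cases b <;> simp [edgeAt, dirVec, sub_eq_add_neg, add_assoc]

lemma occAdj_shift (x a b : Site d) (ω : Config d) :
    occAdj d (shift d x ω) a b ↔ occAdj d ω (x + a) (x + b) := by
  unfold occAdj
  refine exists_congr fun u => ?_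
  rw [occStep_shift]
  constructor
  · rintro ⟨rfl, h⟩; exact ⟨by rw [add_assoc], h⟩
  · rintro ⟨hb, h⟩; exact ⟨by rwa [add_assoc, add_right_inj] at hb, h⟩

lemma mem_cluster_shift_mp {x a b : Site d} {ω : Config d}
    (h : b ∈ cluster d (shift d x ω) a) : x + b ∈ cluster d ω (x + a) := by
  have h' : Relation.ReflTransGen (occAdj d (shift d x ω)) a b := h
  clear h
  induction h' with
  | refl => exact Relation.ReflTransGen.refl
  | @tail c b0 _ hadj ih =>
      exact Relation.ReflTransGen.tail ih ((occAdj_shift x c b0 ω).1 hadj)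

lemma mem_cluster_shift (x a b : Site d) (ω : Config d) :
    b ∈ cluster d (shift d x ω) a ↔ x + b ∈ cluster d ω (x + a) := by
  constructor
  · exact mem_cluster_shift_mp
  · intro h
    have h2 : x + b ∈ cluster d (shift d (-x) (shift d x ω)) (x + a) := by
      rwa [shift_shift, add_neg_cancel, shift_zero]
    have h3 := mem_cluster_shift_mp h2
    simpa using h3

lemma inInfCluster_shift (x a : Site d) (ω : Config d) :
    inInfCluster d (shift d x ω) a ↔ inInfCluster d ω (x + a) := by
  have himg : (fun b => x + b) '' cluster d (shift d x ω) a = cluster d ω (x + a) := by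
    ext c
    simp only [Set.mem_image]
    constructor
    · rintro ⟨b, hb, rfl⟩; exact (mem_cluster_shift x a b ω).1 hb
    · intro hc
      exact ⟨-x + c, (mem_cluster_shift x a (-x + c) ω).2 (by simpa using hc), by simp⟩
  have hinj : Function.Injective (fun b : Site d => x + b) := fun b1 b2 h => by simpa using h
  unfold inInfCluster
  constructor
  · intro h
    rw [← himg]
    exact (Set.infinite_image_iff hinj.injOn).2 h
  · intro h
    exact Set.Infinite.of_image _ (himg ▸ h)

lemma cluster_adj (ω : Config d) (x : Site d) (u : Fin d × Bool) (h : occStep d ω x u) :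
    cluster d ω x = cluster d ω (x + dirVec d u) := by
  have h1 : occAdj d ω x (x + dirVec d u) := ⟨u, rfl, h⟩
  have h2 : occAdj d ω (x + dirVec d u) x :=
    ⟨(u.1, !u.2), by rw [dirVec_not]; exact (add_neg_cancel_right x (dirVec d u)).symm, by
      unfold occStep; rw [edgeAt_rev]; exact h⟩
  ext z
  exact ⟨fun hz => Relation.ReflTransGen.head h2 hz,
    fun hz => Relation.ReflTransGen.head h1 hz⟩

lemma measurable_shift (x : Site d) : Measurable (shift d x) :=
  measurable_pi_iff.2 fun _ => measurable_pi_apply _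

lemma measurableSet_occStep (x : Site d) (u : Fin d × Bool) :
    MeasurableSet {ω : Config d | occStep d ω x u} := by
  have h : {ω : Config d | occStep d ω x u}
      = (fun ω : Config d => ω (edgeAt d x u)) ⁻¹' {true} := by
    ext ω; simp [occStep]
  rw [h]
  exact measurable_pi_apply _ (measurableSet_singleton true)

lemma measurableSet_occAdj (a b : Site d) :
    MeasurableSet {ω : Config d | occAdj d ω a b} := by
  have h : {ω : Config d | occAdj d ω a b}
      = ⋃ u : Fin d × Bool, {ω : Config d | b = a + dirVec d u}
          ∩ {ω : Config d | occStep d ω a u} := by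
    ext ω; simp [occAdj]
  rw [h]
  exact MeasurableSet.iUnion fun u =>
    (MeasurableSet.const _).inter (measurableSet_occStep a u)

lemma measurableSet_chain (a : Site d) (l : List (Site d)) :
    MeasurableSet {ω : Config d | List.Chain (occAdj d ω) a l} := by
  induction l generalizing a with
  | nil =>
    have h : {ω : Config d | List.Chain (occAdj d ω) a ([] : List (Site d))} = Set.univ :=
      Set.eq_univ_of_forall fun ω => List.Chain.nil
    rw [h]; exact MeasurableSet.univ
  | cons b l ih =>
    have h : {ω : Config d | List.Chain (occAdj d ω) a (b :: l)}
        = {ω : Config d | occAdj d ω a b} ∩ {ω : Config d | List.Chain (occAdj d ω) b l} := by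
      ext ω; simp [List.Chain, List.isChain_cons_cons]
    rw [h]; exact (measurableSet_occAdj a b).inter (ih b)

lemma measurableSet_mem_cluster (x y : Site d) :
    MeasurableSet {ω : Config d | y ∈ cluster d ω x} := by
  have h : {ω : Config d | y ∈ cluster d ω x}
      = ⋃ l : List (Site d), {ω : Config d | List.getLast (x :: l) (List.cons_ne_nil x l) = y}
          ∩ {ω : Config d | List.Chain (occAdj d ω) x l} := by
    ext ω
    simp only [Set.mem_iUnion, Set.mem_inter_iff, Set.mem_setOf_eq]
    constructor
    · intro hmem
      obtain ⟨l, h1, h2⟩ := List.exists_isChain_cons_of_relationReflTransGen hmem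
      exact ⟨l, h2, h1⟩
    · rintro ⟨l, h2, h1⟩
      exact List.relationReflTransGen_of_exists_isChain_cons l h1 h2
  rw [h]
  exact MeasurableSet.iUnion fun l =>
    (MeasurableSet.const _).inter (measurableSet_chain x l)

lemma measurableSet_inInfCluster (x : Site d) :
    MeasurableSet {ω : Config d | inInfCluster d ω x} := by
  have h : {ω : Config d | inInfCluster d ω x}
      = ⋂ t : Finset (Site d), ⋃ y : Site d,
          {ω : Config d | y ∉ t} ∩ {ω : Config d | y ∈ cluster d ω x} := by
    ext ω
    simp only [Set.mem_iInter, Set.mem_iUnion, Set.mem_inter_iff, Set.mem_setOf_eq]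
    constructor
    · intro hinf t
      obtain ⟨y, hy, hyt⟩ := Set.Infinite.exists_notMem_finset hinf t
      exact ⟨y, hyt, hy⟩
    · intro hall
      show (cluster d ω x).Infinite
      by_contra hfin
      rw [Set.not_infinite] at hfin
      obtain ⟨y, hyt, hy⟩ := hall hfin.toFinset
      exact hyt (hfin.mem_toFinset.2 hy)
  rw [h]
  exact MeasurableSet.iInter fun t => MeasurableSet.iUnion fun y =>
    (MeasurableSet.const _).inter (measurableSet_mem_cluster x y)

lemma measurableSet_Omega0 : MeasurableSet (Omega0 d) :=
  measurableSet_inInfCluster 0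

/-- Cylinder sets. -/
def cylSets (d : ℕ) : Set (Set (Config d)) :=
  {A | ∃ (s : Finset (Edge d)) (f : Edge d → Bool), A = {ω | ∀ e ∈ s, ω e = f e}}

lemma measurableSet_cylSet {s : Finset (Edge d)} {f : Edge d → Bool} :
    MeasurableSet {ω : Config d | ∀ e ∈ s, ω e = f e} := by
  have h : {ω : Config d | ∀ e ∈ s, ω e = f e}
      = ⋂ e ∈ (s : Set (Edge d)), {ω : Config d | ω e = f e} := by
    ext ω; simp
  rw [h]
  refine MeasurableSet.biInter s.countable_toSet fun e _ => ?_
  have h2 : {ω : Config d | ω e = f e} = (fun ω : Config d => ω e) ⁻¹' {f e} := by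
    ext ω; simp
  rw [h2]
  exact measurable_pi_apply _ (measurableSet_singleton (f e))

lemma generateFrom_cylSets (d : ℕ) :
    (inferInstance : MeasurableSpace (Config d)) = .generateFrom (cylSets d) := by
  refine le_antisymm ?_ (MeasurableSpace.generateFrom_le ?_)
  · have hev : ∀ e : Edge d,
        @Measurable (Config d) Bool (.generateFrom (cylSets d)) ⊤ (fun ω => ω e) := by
      intro e
      refine @measurable_to_countable' Bool (Config d) ⊤ _ (.generateFrom (cylSets d)) _
        fun b => ?_
      refine MeasurableSpace.measurableSet_generateFrom ⟨{e}, fun _ => b, ?_⟩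
      ext ω; simp [Set.mem_preimage]
    exact iSup_le fun e => measurable_iff_comap_le.1 (hev e)
  · rintro A ⟨s, f, rfl⟩
    exact measurableSet_cylSet

lemma isPiSystem_cylSets (d : ℕ) : IsPiSystem (cylSets d) := by
  classical
  rintro A ⟨s1, f1, rfl⟩ B ⟨s2, f2, rfl⟩ hne
  refine ⟨s1 ∪ s2, fun e => if e ∈ s1 then f1 e else f2 e, ?_⟩
  obtain ⟨ω0, hω0⟩ := hne
  have hω1 : ∀ e ∈ s1, ω0 e = f1 e := hω0.1
  have hω2 : ∀ e ∈ s2, ω0 e = f2 e := hω0.2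
  ext ω
  simp only [Set.mem_inter_iff, Set.mem_setOf_eq, Finset.mem_union]
  constructor
  · rintro ⟨h1, h2⟩ e he
    rcases he with he | he
    · simp [he, h1 e he]
    · by_cases h1e : e ∈ s1
      · simp [h1e, h1 e h1e]
      · simp [h1e, h2 e he]
  · intro hall
    constructor
    · intro e he
      have := hall e (Or.inl he); simpa [he] using this
    · intro e he
      by_cases h1e : e ∈ s1
      · have h3 := hall e (Or.inl h1e)
        rw [if_pos h1e] at h3
        rw [h3, ← hω1 e h1e, hω2 e he]
      · have h3 := hall e (Or.inr he)
        rwa [if_neg h1e] at h3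

lemma map_shift_eq {p : ℝ} {μ : Measure (Config d)} (hμ : IsBernoulli d p μ) (x : Site d) :
    μ.map (shift d x) = μ := by
  have hprob : IsProbabilityMeasure μ := hμ.1
  have hm : Measurable (shift d x) := measurable_shift x
  have hprob2 : IsProbabilityMeasure (μ.map (shift d x)) :=
    Measure.isProbabilityMeasure_map hm.aemeasurable
  refine ext_of_generate_finite (cylSets d) (generateFrom_cylSets d) (isPiSystem_cylSets d)
    ?_ (by simp [measure_univ])
  rintro A ⟨s, f, rfl⟩
  rw [Measure.map_apply hm measurableSet_cylSet]
  have hinj : Function.Injective (fun e : Edge d => (x + e.1, e.2)) := by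
    intro a b hab
    simp only [Prod.mk.injEq] at hab
    exact Prod.ext (add_left_cancel hab.1) hab.2
  have hpre : shift d x ⁻¹' {ω : Config d | ∀ e ∈ s, ω e = f e}
      = {ω : Config d | ∀ e ∈ s.image (fun e : Edge d => (x + e.1, e.2)),
          ω e = f (e.1 - x, e.2)} := by
    ext ω
    simp only [Set.mem_preimage, Set.mem_setOf_eq, Finset.mem_image]
    constructor
    · intro hall e he
      obtain ⟨e', he', rfl⟩ := he
      simpa [shift, add_sub_cancel_left] using hall e' he'
    · intro hall e he
      have h3 := hall (x + e.1, e.2) ⟨e, he, rfl⟩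
      simpa [shift, add_sub_cancel_left] using h3
  rw [hpre, hμ.2, hμ.2, Finset.prod_image (fun a _ b _ hab => hinj hab)]
  refine Finset.prod_congr rfl fun e he => ?_
  simp [add_sub_cancel_left]

/-- The shift as a measurable equivalence. -/
def shiftEquiv (d : ℕ) (x : Site d) : Config d ≃ᵐ Config d :=
  ⟨⟨shift d x, shift d (-x),
    fun ω => by rw [shift_shift, add_neg_cancel, shift_zero],
    fun ω => by rw [shift_shift, neg_add_cancel, shift_zero]⟩,
    measurable_shift x, measurable_shift (-x)⟩

lemma integral_shift {p : ℝ} {μ : Measure (Config d)} (hμ : IsBernoulli d p μ)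
    (x : Site d) (F : Config d → ℝ) :
    ∫ ω, F (shift d x ω) ∂μ = ∫ ω, F ω ∂μ :=
  MeasurePreserving.integral_comp ⟨measurable_shift x, map_shift_eq hμ x⟩
    (shiftEquiv d x).measurableEmbedding F

open Classical in
lemma keyD {p : ℝ} {μ : Measure (Config d)} (hμ : IsBernoulli d p μ)
    (F : Config d → ℝ) (u : Fin d × Bool) :
    ∫ ω, F (shift d (dirVec d u) ω) * (if occStep d ω 0 u then (1:ℝ) else 0)
        * (if ω ∈ Omega0 d then (1:ℝ) else 0) ∂μ
      = ∫ ω, F ω * (if occStep d ω 0 (u.1, !u.2) then (1:ℝ) else 0)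
        * (if ω ∈ Omega0 d then (1:ℝ) else 0) ∂μ := by
  have h2 := integral_shift hμ (-(dirVec d u))
    (fun ω => F (shift d (dirVec d u) ω) * (if occStep d ω 0 u then (1:ℝ) else 0)
        * (if ω ∈ Omega0 d then (1:ℝ) else 0))
  refine h2.symm.trans ?_
  refine integral_congr_ae (Filter.Eventually.of_forall fun ω => ?_)
  have hshift : shift d (dirVec d u) (shift d (-(dirVec d u)) ω) = ω := by
    rw [shift_shift, neg_add_cancel, shift_zero]
  have hocc : occStep d (shift d (-(dirVec d u)) ω) 0 u ↔ occStep d ω 0 (u.1, !u.2) := by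
    rw [occStep_shift, add_zero]
    unfold occStep
    have he := edgeAt_rev (-(dirVec d u)) u
    rw [neg_add_cancel] at he
    rw [← he]
  show F (shift d (dirVec d u) (shift d (-(dirVec d u)) ω))
      * (if occStep d (shift d (-(dirVec d u)) ω) 0 u then (1:ℝ) else 0)
      * (if shift d (-(dirVec d u)) ω ∈ Omega0 d then (1:ℝ) else 0)
    = F ω * (if occStep d ω 0 (u.1, !u.2) then (1:ℝ) else 0)
      * (if ω ∈ Omega0 d then (1:ℝ) else 0)
  rw [hshift]
  by_cases hoc : occStep d ω 0 (u.1, !u.2)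
  · have h3 : occStep d (shift d (-(dirVec d u)) ω) 0 u := hocc.2 hoc
    have hmem : (shift d (-(dirVec d u)) ω ∈ Omega0 d) ↔ (ω ∈ Omega0 d) := by
      show inInfCluster d (shift d (-(dirVec d u)) ω) 0 ↔ inInfCluster d ω 0
      rw [inInfCluster_shift, add_zero]
      have hcl : cluster d ω 0 = cluster d ω (-(dirVec d u)) := by
        have := cluster_adj ω 0 (u.1, !u.2) hoc
        rwa [dirVec_not, zero_add] at this
      unfold inInfCluster
      rw [hcl]
    simp only [h3, hoc, if_true, hmem]
  · have h3 : ¬ occStep d (shift d (-(dirVec d u)) ω) 0 u := fun hh => hoc (hocc.1 hh)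
    simp [h3, hoc]

open Classical in
lemma integral_P0 {μ : Measure (Config d)} (h : Config d → ℝ) :
    ∫ ω, h ω ∂(P0 d μ)
      = (μ (Omega0 d))⁻¹.toReal * ∫ ω, h ω * (if ω ∈ Omega0 d then (1:ℝ) else 0) ∂μ := by
  rw [P0, ProbabilityTheory.cond, integral_smul_measure, smul_eq_mul]
  congr 1
  rw [← integral_indicator measurableSet_Omega0]
  refine integral_congr_ae (Filter.Eventually.of_forall fun ω => ?_)
  by_cases hω : ω ∈ Omega0 d <;> simp [Set.indicator_apply, hω]

lemma integrable_four {μ : Measure (Config d)} [IsProbabilityMeasure μ]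
    {a b z w : Config d → ℝ} {Ca Cb : ℝ}
    (ha : Measurable a) (hb : Measurable b) (hz : Measurable z) (hw : Measurable w)
    (hCa : ∀ ω, |a ω| ≤ Ca) (hCb : ∀ ω, |b ω| ≤ Cb)
    (hz01 : ∀ ω, z ω = 0 ∨ z ω = 1) (hw01 : ∀ ω, w ω = 0 ∨ w ω = 1) :
    Integrable (fun ω => a ω * b ω * z ω * w ω) μ := by
  refine (integrable_const (Ca * Cb)).mono'
    (((ha.mul hb).mul hz).mul hw).aestronglyMeasurable
    (Filter.Eventually.of_forall fun ω => ?_)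
  simp only [Real.norm_eq_abs]
  have h0a := (abs_nonneg (a ω)).trans (hCa ω)
  have h0b := (abs_nonneg (b ω)).trans (hCb ω)
  rcases hz01 ω with hz0 | hz1
  · rw [hz0]; simpa using mul_nonneg h0a h0b
  · rcases hw01 ω with hw0 | hw1
    · rw [hw0]; simpa using mul_nonneg h0a h0b
    · rw [hz1, hw1, mul_one, mul_one, abs_mul]
      exact mul_le_mul (hCa ω) (hCb ω) (abs_nonneg (b ω)) h0a

end Aux

open Classical in
/-- Lemma 1.1: reversibility and stationarity of `ℙ_0` for the
environment chain of the lazy walk on the percolation cluster. -/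
theorem reversibility_of_environment_chain
    (d : ℕ) (hd : 2 ≤ d) (p : ℝ) (hp0 : 0 < p) (hp1 : p < 1) (hpc : pc d < p)
    (μ : Measure (Config d)) (hμ : IsBernoulli d p μ) :
    -- (i) the basic identity 𝔼₀(f∘τ_e 1_{ω_e=1}) = 𝔼₀(f 1_{ω_{-e}=1})
    (∀ f : Config d → ℝ, Measurable f → (∃ C, ∀ ω, |f ω| ≤ C) →
      ∀ u : Fin d × Bool,
        ∫ ω, f (shift d (dirVec d u) ω) * (if occStep d ω 0 u then (1:ℝ) else 0)
            ∂(P0 d μ)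
          = ∫ ω, f ω * (if occStep d ω 0 (u.1, !u.2) then (1:ℝ) else 0) ∂(P0 d μ)) ∧
    -- (ii) reversibility: 𝔼₀(f · Qg) = 𝔼₀(g · Qf)
    (∀ f g : Config d → ℝ, Measurable f → (∃ C, ∀ ω, |f ω| ≤ C) →
        Measurable g → (∃ C, ∀ ω, |g ω| ≤ C) →
      ∫ ω, f ω * Qop d g ω ∂(P0 d μ) = ∫ ω, g ω * Qop d f ω ∂(P0 d μ)) ∧
    -- (iii) stationarity of ℙ₀ for the kernel Q
    (∀ f : Config d → ℝ, Measurable f → (∃ C, ∀ ω, |f ω| ≤ C) →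
      ∫ ω, Qop d f ω ∂(P0 d μ) = ∫ ω, f ω ∂(P0 d μ)) := by
  classical
  haveI : IsProbabilityMeasure μ := hμ.1
  have hd0 : (0:ℝ) < (d:ℝ) := by
    have : (0:ℕ) < d := lt_of_lt_of_le (by norm_num) hd
    exact_mod_cast this
  have hI : ∀ f : Config d → ℝ, Measurable f → (∃ C, ∀ ω, |f ω| ≤ C) →
      ∀ u : Fin d × Bool,
        ∫ ω, f (shift d (dirVec d u) ω) * (if occStep d ω 0 u then (1:ℝ) else 0) ∂(P0 d μ)
          = ∫ ω, f ω * (if occStep d ω 0 (u.1, !u.2) then (1:ℝ) else 0) ∂(P0 d μ) := by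
    intro f hf hfb u
    rw [integral_P0, integral_P0]
    congr 1
    exact keyD hμ f u
  have hkey2 : ∀ (a b : Config d → ℝ) (u : Fin d × Bool),
      ∫ ω, a ω * b (shift d (dirVec d u) ω)
          * (if occStep d ω 0 u then (1:ℝ) else 0)
          * (if ω ∈ Omega0 d then (1:ℝ) else 0) ∂μ
        = ∫ ω, b ω * a (shift d (dirVec d (u.1, !u.2)) ω)
          * (if occStep d ω 0 (u.1, !u.2) then (1:ℝ) else 0)
          * (if ω ∈ Omega0 d then (1:ℝ) else 0) ∂μ := by
    intro a b u
    have hF := keyD hμ (fun ω => b ω * a (shift d (dirVec d (u.1, !u.2)) ω)) u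
    refine Eq.trans ?_ hF
    refine integral_congr_ae (Filter.Eventually.of_forall fun ω => ?_)
    have hs : shift d (dirVec d (u.1, !u.2)) (shift d (dirVec d u) ω) = ω := by
      rw [shift_shift, dirVec_not, add_neg_cancel, shift_zero]
    show a ω * b (shift d (dirVec d u) ω)
          * (if occStep d ω 0 u then (1:ℝ) else 0)
          * (if ω ∈ Omega0 d then (1:ℝ) else 0)
        = b (shift d (dirVec d u) ω)
          * a (shift d (dirVec d (u.1, !u.2)) (shift d (dirVec d u) ω))
          * (if occStep d ω 0 u then (1:ℝ) else 0)
          * (if ω ∈ Omega0 d then (1:ℝ) else 0)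
    rw [hs]; ring
  have hpoint : ∀ (a b : Config d → ℝ) (ω : Config d),
      a ω * Qop d b ω * (if ω ∈ Omega0 d then (1:ℝ) else 0)
        = 1 / (2 * (d:ℝ)) * ∑ u : Fin d × Bool,
            (a ω * b (shift d (dirVec d u) ω) * (if occStep d ω 0 u then (1:ℝ) else 0)
                * (if ω ∈ Omega0 d then (1:ℝ) else 0)
             + a ω * b ω * (if occStep d ω 0 u then (0:ℝ) else 1)
                * (if ω ∈ Omega0 d then (1:ℝ) else 0)) := by
    intro a b ω
    rw [Qop, smul_eq_mul]
    rw [show a ω * (1 / (2 * (d:ℝ))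
          * ∑ u : Fin d × Bool, (if occStep d ω 0 u then b (shift d (dirVec d u) ω) else b ω))
        * (if ω ∈ Omega0 d then (1:ℝ) else 0)
      = 1 / (2 * (d:ℝ))
        * ((∑ u : Fin d × Bool, (if occStep d ω 0 u then b (shift d (dirVec d u) ω) else b ω))
            * (a ω * (if ω ∈ Omega0 d then (1:ℝ) else 0))) from by ring]
    rw [Finset.sum_mul]
    congr 1
    refine Finset.sum_congr rfl fun u _ => ?_
    by_cases hocc : occStep d ω 0 u <;> simp [hocc] <;> ring
  have hmain : ∀ (a b : Config d → ℝ) (Ca Cb : ℝ), Measurable a → Measurable b →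
      (∀ ω, |a ω| ≤ Ca) → (∀ ω, |b ω| ≤ Cb) →
      ∫ ω, a ω * Qop d b ω * (if ω ∈ Omega0 d then (1:ℝ) else 0) ∂μ
        = 1 / (2 * (d:ℝ)) * ∑ u : Fin d × Bool,
            ((∫ ω, a ω * b (shift d (dirVec d u) ω) * (if occStep d ω 0 u then (1:ℝ) else 0)
                * (if ω ∈ Omega0 d then (1:ℝ) else 0) ∂μ)
             + ∫ ω, a ω * b ω * (if occStep d ω 0 u then (0:ℝ) else 1)
                * (if ω ∈ Omega0 d then (1:ℝ) else 0) ∂μ) := by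
    intro a b Ca Cb ha hb hCa hCb
    have hiocc : ∀ u : Fin d × Bool,
        Integrable (fun ω => a ω * b (shift d (dirVec d u) ω)
          * (if occStep d ω 0 u then (1:ℝ) else 0)
          * (if ω ∈ Omega0 d then (1:ℝ) else 0)) μ := by
      intro u
      refine integrable_four ha (hb.comp (measurable_shift (dirVec d u)))
        (Measurable.ite (measurableSet_occStep 0 u) measurable_const measurable_const)
        (Measurable.ite measurableSet_Omega0 measurable_const measurable_const)
        hCa (fun ω => hCb _) (fun ω => ?_) (fun ω => ?_)
      · by_cases h : occStep d ω 0 u <;> simp [h]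
      · by_cases h : ω ∈ Omega0 d <;> simp [h]
    have hilazy : ∀ u : Fin d × Bool,
        Integrable (fun ω => a ω * b ω * (if occStep d ω 0 u then (0:ℝ) else 1)
          * (if ω ∈ Omega0 d then (1:ℝ) else 0)) μ := by
      intro u
      refine integrable_four ha hb
        (Measurable.ite (measurableSet_occStep 0 u) measurable_const measurable_const)
        (Measurable.ite measurableSet_Omega0 measurable_const measurable_const)
        hCa hCb (fun ω => ?_) (fun ω => ?_)
      · by_cases h : occStep d ω 0 u <;> simp [h]
      · by_cases h : ω ∈ Omega0 d <;> simp [h]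
    calc ∫ ω, a ω * Qop d b ω * (if ω ∈ Omega0 d then (1:ℝ) else 0) ∂μ
        = ∫ ω, 1 / (2 * (d:ℝ)) * ∑ u : Fin d × Bool,
            (a ω * b (shift d (dirVec d u) ω) * (if occStep d ω 0 u then (1:ℝ) else 0)
                * (if ω ∈ Omega0 d then (1:ℝ) else 0)
             + a ω * b ω * (if occStep d ω 0 u then (0:ℝ) else 1)
                * (if ω ∈ Omega0 d then (1:ℝ) else 0)) ∂μ :=
          integral_congr_ae (Filter.Eventually.of_forall fun ω => hpoint a b ω)
      _ = 1 / (2 * (d:ℝ)) * ∫ ω, ∑ u : Fin d × Bool,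
            (a ω * b (shift d (dirVec d u) ω) * (if occStep d ω 0 u then (1:ℝ) else 0)
                * (if ω ∈ Omega0 d then (1:ℝ) else 0)
             + a ω * b ω * (if occStep d ω 0 u then (0:ℝ) else 1)
                * (if ω ∈ Omega0 d then (1:ℝ) else 0)) ∂μ :=
          integral_const_mul _ _
      _ = 1 / (2 * (d:ℝ)) * ∑ u : Fin d × Bool, ∫ ω,
            (a ω * b (shift d (dirVec d u) ω) * (if occStep d ω 0 u then (1:ℝ) else 0)
                * (if ω ∈ Omega0 d then (1:ℝ) else 0)
             + a ω * b ω * (if occStep d ω 0 u then (0:ℝ) else 1)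
                * (if ω ∈ Omega0 d then (1:ℝ) else 0)) ∂μ := by
          congr 1
          exact integral_finset_sum Finset.univ (fun u _ => (hiocc u).add (hilazy u))
      _ = 1 / (2 * (d:ℝ)) * ∑ u : Fin d × Bool,
            ((∫ ω, a ω * b (shift d (dirVec d u) ω) * (if occStep d ω 0 u then (1:ℝ) else 0)
                * (if ω ∈ Omega0 d then (1:ℝ) else 0) ∂μ)
             + ∫ ω, a ω * b ω * (if occStep d ω 0 u then (0:ℝ) else 1)
                * (if ω ∈ Omega0 d then (1:ℝ) else 0) ∂μ) := by
          congr 1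
          exact Finset.sum_congr rfl fun u _ => integral_add (hiocc u) (hilazy u)
  have hII : ∀ f g : Config d → ℝ, Measurable f → (∃ C, ∀ ω, |f ω| ≤ C) →
      Measurable g → (∃ C, ∀ ω, |g ω| ≤ C) →
      ∫ ω, f ω * Qop d g ω ∂(P0 d μ) = ∫ ω, g ω * Qop d f ω ∂(P0 d μ) := by
    intro f g hf hfb hg hgb
    obtain ⟨Cf, hCf⟩ := hfb
    obtain ⟨Cg, hCg⟩ := hgb
    rw [integral_P0, integral_P0]
    congr 1
    rw [hmain f g Cf Cg hf hg hCf hCg, hmain g f Cg Cf hg hf hCg hCf]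
    congr 1
    rw [Finset.sum_add_distrib, Finset.sum_add_distrib]
    congr 1
    · calc ∑ u : Fin d × Bool,
            ∫ ω, f ω * g (shift d (dirVec d u) ω) * (if occStep d ω 0 u then (1:ℝ) else 0)
              * (if ω ∈ Omega0 d then (1:ℝ) else 0) ∂μ
          = ∑ u : Fin d × Bool,
            ∫ ω, g ω * f (shift d (dirVec d (u.1, !u.2)) ω)
              * (if occStep d ω 0 (u.1, !u.2) then (1:ℝ) else 0)
              * (if ω ∈ Omega0 d then (1:ℝ) else 0) ∂μ :=
            Finset.sum_congr rfl fun u _ => hkey2 f g u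
        _ = ∑ u : Fin d × Bool,
            ∫ ω, g ω * f (shift d (dirVec d u) ω) * (if occStep d ω 0 u then (1:ℝ) else 0)
              * (if ω ∈ Omega0 d then (1:ℝ) else 0) ∂μ :=
            Fintype.sum_equiv
              ⟨fun u : Fin d × Bool => (u.1, !u.2), fun u => (u.1, !u.2),
                fun u => by cases u with | mk i c => simp, fun u => by cases u with | mk i c => simp⟩
              _ _ (fun u => rfl)
    · refine Finset.sum_congr rfl fun u _ => ?_
      refine integral_congr_ae (Filter.Eventually.of_forall fun ω => ?_)
      ring
  refine ⟨hI, hII, ?_⟩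
  intro f hf hfb
  have h1 := hII f (fun _ => (1:ℝ)) hf hfb measurable_const ⟨1, fun ω => by norm_num⟩
  have hQ1 : ∀ ω : Config d, Qop d (fun _ : Config d => (1:ℝ)) ω = 1 := by
    intro ω
    rw [Qop, smul_eq_mul]
    have hsum : (∑ u : Fin d × Bool,
        if occStep d ω 0 u then (fun _ : Config d => (1:ℝ)) (shift d (dirVec d u) ω) else 1)
        = 2 * (d:ℝ) := by
      have h4 : ∀ u : Fin d × Bool, (if occStep d ω 0 u
          then (fun _ : Config d => (1:ℝ)) (shift d (dirVec d u) ω) else 1) = 1 := by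
        intro u; by_cases h : occStep d ω 0 u <;> simp [h]
      rw [Finset.sum_congr rfl fun u _ => h4 u, Finset.sum_const, Finset.card_univ]
      simp only [Fintype.card_prod, Fintype.card_fin, Fintype.card_bool, nsmul_eq_mul, mul_one]
      push_cast
      ring
    rw [hsum]
    have hne : (2 * (d:ℝ)) ≠ 0 := by positivity
    rw [one_div, inv_mul_cancel₀ hne]
  calc ∫ ω, Qop d f ω ∂(P0 d μ)
      = ∫ ω, (fun _ : Config d => (1:ℝ)) ω * Qop d f ω ∂(P0 d μ) :=
        integral_congr_ae (Filter.Eventually.of_forall fun ω => by simp)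
    _ = ∫ ω, f ω * Qop d (fun _ : Config d => (1:ℝ)) ω ∂(P0 d μ) := h1.symm
    _ = ∫ ω, f ω ∂(P0 d μ) :=
        integral_congr_ae (Filter.Eventually.of_forall fun ω => by simp [hQ1 ω])

end QIP
end
end

section
/- Let p > 1 and r ∈ [1, p). Let X_1, X_2, … be random variables on a probability space with sup_{j≥1} ‖X_j‖_p < ∞, and let N be a random variable taking values in the positive integers with N ∈ L^s for some s satisfying s > r(1 + 1/p)/(1 − r/p). Then Σ_{j=1}^N X_j ∈ L^r; explicitly, ‖Σ_{j=1}^N X_j‖_r ≤ C (sup_{j≥1} ‖X_j‖_p) (‖N‖_s)^{s(1/r − 1/p)}, where C is a finite constant depending only on p, r and s. -/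
/-!
Write the random sum as `∑_{j ≥ 1} 1_{N ≥ j} X_j`. Hölder's inequality on the event `{N ≥ j}`
and Markov's inequality give
`‖1_{N ≥ j} X_j‖_r ≤ M P(N ≥ j)^(1/r - 1/p) ≤ M (‖N‖_s / j)^(s (1/r - 1/p))`.
The hypothesis on `s` makes `s (1/r - 1/p) > 1`, so these bounds are summable, and Minkowski's
inequality for the partial sums together with Fatou's lemma (the partial sums are eventually
constant pointwise) yields the claim with `C = ∑_j j^(-s (1/r - 1/p))`.
-/

open MeasureTheory Filter Finset
open scoped ENNReal Topology

section RandomSum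

variable {α E : Type*} [NormedAddCommGroup E]

def randomSum (f : ℕ → α → E) (N : α → ℕ) (a : α) : E := ∑ j ∈ Icc 1 (N a), f j a

theorem randomSum_eq_sum_indicator (f : ℕ → α → E) (N : α → ℕ) {a : α} {n : ℕ}
    (hn : N a ≤ n) :
    randomSum f N a = (∑ j ∈ Icc 1 n, {b | j ≤ N b}.indicator (f j)) a := by
  have hIcc : {j ∈ Icc 1 n | j ≤ N a} = Icc 1 (N a) := by
    ext j; simp only [mem_filter, mem_Icc]; omega
  simp only [randomSum, Finset.sum_apply, Set.indicator_apply, Set.mem_ofPred_eq, ← sum_filter,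
    hIcc]

theorem tendsto_sum_indicator_randomSum (f : ℕ → α → E) (N : α → ℕ) (a : α) :
    Tendsto (fun n => (∑ j ∈ Icc 1 n, {b | j ≤ N b}.indicator (f j)) a) atTop
      (𝓝 (randomSum f N a)) :=
  tendsto_atTop_of_eventually_const fun _ hn => (randomSum_eq_sum_indicator f N hn).symm

variable [MeasurableSpace α] {μ : Measure α} {f : ℕ → α → E} {N : α → ℕ}

theorem aestronglyMeasurable_sum_indicator (hf : ∀ j, AEStronglyMeasurable (f j) μ)
    (hN : Measurable N) (n : ℕ) :
    AEStronglyMeasurable (∑ j ∈ Icc 1 n, {b | j ≤ N b}.indicator (f j)) μ :=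
  Finset.aestronglyMeasurable_sum _ fun j _ => (hf j).indicator (hN measurableSet_Ici)

theorem AEStronglyMeasurable.randomSum (hf : ∀ j, AEStronglyMeasurable (f j) μ)
    (hN : Measurable N) : AEStronglyMeasurable (randomSum f N) μ :=
  aestronglyMeasurable_of_tendsto_ae atTop (aestronglyMeasurable_sum_indicator hf hN)
    (ae_of_all _ (tendsto_sum_indicator_randomSum f N))

theorem eLpNorm_randomSum_le {p : ℝ≥0∞} (hp : 1 ≤ p) (hf : ∀ j, AEStronglyMeasurable (f j) μ)
    (hN : Measurable N) {B : ℝ≥0∞}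
    (hB : ∀ n, ∑ j ∈ Icc 1 n, eLpNorm ({a | j ≤ N a}.indicator (f j)) p μ ≤ B) :
    eLpNorm (randomSum f N) p μ ≤ B := by
  refine (Lp.eLpNorm_lim_le_liminf_eLpNorm (aestronglyMeasurable_sum_indicator hf hN) _
    (ae_of_all _ (tendsto_sum_indicator_randomSum f N))).trans ?_
  refine liminf_le_of_frequently_le' (Frequently.of_forall fun n => ?_)
  exact (eLpNorm_sum_le (fun j _ => (hf j).indicator (hN measurableSet_Ici)) hp).trans (hB n)

end RandomSum

theorem sum_Icc_div_natCast_rpow_le {x : ℝ} (hx : 1 < x) (B : ℝ≥0∞) (n : ℕ) :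
    ∑ j ∈ Icc 1 n, (B / j) ^ x ≤ B ^ x * ENNReal.ofReal (∑' j : ℕ, (j : ℝ) ^ (-x)) := by
  have hsummable : Summable fun j : ℕ => (j : ℝ) ^ (-x) := Real.summable_nat_rpow.mpr (by linarith)
  have hterm : ∀ j ∈ Icc 1 n, (B / j) ^ x = B ^ x * ENNReal.ofReal ((j : ℝ) ^ (-x)) := by
    intro j hj
    have hj : (0 : ℝ) < j := by exact_mod_cast (mem_Icc.mp hj).1
    rw [ENNReal.div_rpow_of_nonneg _ _ (by linarith), div_eq_mul_inv, ← ENNReal.rpow_neg,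
      ← ENNReal.ofReal_rpow_of_pos hj, ENNReal.ofReal_natCast]
  rw [sum_congr rfl hterm, ← mul_sum, ← ENNReal.ofReal_sum_of_nonneg fun j _ => by positivity]
  gcongr
  exact hsummable.sum_le_tsum _ fun j _ => by positivity

section TailBounds

variable {α E : Type*} [MeasurableSpace α] {μ : Measure α} [NormedAddCommGroup E]

theorem eLpNorm_indicator_le_eLpNorm_mul_rpow_measure {p q : ℝ≥0∞} (hpq : p ≤ q) {f : α → E}
    (hf : AEStronglyMeasurable f μ) {t : Set α} (ht : MeasurableSet t) :
    eLpNorm (t.indicator f) p μ ≤ eLpNorm f q μ * μ t ^ (1 / p.toReal - 1 / q.toReal) := by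
  rw [eLpNorm_indicator_eq_eLpNorm_restrict ht]
  calc eLpNorm f p (μ.restrict t)
      ≤ eLpNorm f q (μ.restrict t) * μ.restrict t Set.univ ^ (1 / p.toReal - 1 / q.toReal) :=
        eLpNorm_le_eLpNorm_mul_rpow_measure_univ hpq hf.restrict
    _ ≤ eLpNorm f q μ * μ t ^ (1 / p.toReal - 1 / q.toReal) := by
        rw [Measure.restrict_apply_univ]
        gcongr
        exact Measure.restrict_le_self

theorem measure_ge_le_eLpNorm_div_rpow {s : ℝ≥0∞} (hs0 : s ≠ 0) (hs : s ≠ ∞) {N : α → ℕ}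
    (hN : Measurable N) {j : ℕ} (hj : j ≠ 0) :
    μ {a | j ≤ N a} ≤ (eLpNorm (fun a => (N a : ℝ)) s μ / j) ^ s.toReal := by
  have hmarkov := mul_meas_ge_le_pow_eLpNorm' μ hs0 hs
    (by fun_prop : Measurable fun a => (N a : ℝ)).aestronglyMeasurable (j : ℝ≥0∞)
  simp only [Real.enorm_natCast, Nat.cast_le] at hmarkov
  rw [ENNReal.div_rpow_of_nonneg _ _ ENNReal.toReal_nonneg, ENNReal.le_div_iff_mul_le
    (Or.inl (by positivity)) (Or.inl (by finiteness)), mul_comm]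
  exact hmarkov

theorem eLpNorm_indicator_ge_le_mul_eLpNorm_div_rpow {p q s : ℝ≥0∞} (hpq : p ≤ q)
    (hs0 : s ≠ 0) (hs : s ≠ ∞) {f : α → E} (hf : AEStronglyMeasurable f μ) {N : α → ℕ}
    (hN : Measurable N) {j : ℕ} (hj : j ≠ 0) :
    eLpNorm ({a | j ≤ N a}.indicator f) p μ ≤
      eLpNorm f q μ *
        (eLpNorm (fun a => (N a : ℝ)) s μ / j) ^ (s.toReal * (1 / p.toReal - 1 / q.toReal)) := by
  rcases eq_or_ne p 0 with rfl | hp0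
  · simp
  have hθ : 0 ≤ 1 / p.toReal - 1 / q.toReal := by
    rcases eq_or_ne q ∞ with rfl | hq
    · simp only [ENNReal.toReal_top, div_zero, sub_zero]
      positivity
    · exact sub_nonneg.mpr (one_div_le_one_div_of_le
        (ENNReal.toReal_pos hp0 (ne_top_of_le_ne_top hq hpq)) (ENNReal.toReal_mono hq hpq))
  refine (eLpNorm_indicator_le_eLpNorm_mul_rpow_measure hpq hf (hN measurableSet_Ici)).trans ?_
  rw [ENNReal.rpow_mul]
  gcongr
  exact measure_ge_le_eLpNorm_div_rpow hs0 hs hN hj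

theorem sum_eLpNorm_indicator_ge_le {p q s : ℝ≥0∞} (hpq : p ≤ q) (hs0 : s ≠ 0) (hs : s ≠ ∞)
    {f : ℕ → α → E} (hf : ∀ j, AEStronglyMeasurable (f j) μ) {M : ℝ≥0∞}
    (hM : ∀ j, eLpNorm (f j) q μ ≤ M) {N : α → ℕ} (hN : Measurable N)
    (hx : 1 < s.toReal * (1 / p.toReal - 1 / q.toReal)) (n : ℕ) :
    ∑ j ∈ Icc 1 n, eLpNorm ({a | j ≤ N a}.indicator (f j)) p μ ≤
      M * (eLpNorm (fun a => (N a : ℝ)) s μ ^ (s.toReal * (1 / p.toReal - 1 / q.toReal)) *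
        ENNReal.ofReal (∑' j : ℕ, (j : ℝ) ^ (-(s.toReal * (1 / p.toReal - 1 / q.toReal))))) := by
  calc ∑ j ∈ Icc 1 n, eLpNorm ({a | j ≤ N a}.indicator (f j)) p μ
      ≤ ∑ j ∈ Icc 1 n, M * (eLpNorm (fun a => (N a : ℝ)) s μ / j) ^
          (s.toReal * (1 / p.toReal - 1 / q.toReal)) := by
        refine sum_le_sum fun j hj => ?_
        have hj : j ≠ 0 := Nat.one_le_iff_ne_zero.mp (mem_Icc.mp hj).1
        grw [eLpNorm_indicator_ge_le_mul_eLpNorm_div_rpow hpq hs0 hs (hf j) hN hj, hM j]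
    _ ≤ _ := by
        rw [← mul_sum]
        gcongr
        exact sum_Icc_div_natCast_rpow_le hx _ n

end TailBounds

theorem one_lt_mul_one_div_sub_one_div {p r s : ℝ} (hr : 0 < r) (hrp : r < p)
    (hs : r * (1 + 1 / p) / (1 - r / p) < s) : 1 < s * (1 / r - 1 / p) := by
  have hp : 0 < p := hr.trans hrp
  have hthreshold : r * (1 + 1 / p) / (1 - r / p) * (1 / r - 1 / p) = (p + 1) / p := by
    have : p - r ≠ 0 := sub_ne_zero_of_ne hrp.ne'
    field_simp
  have hθ : 0 < 1 / r - 1 / p := sub_pos.mpr (one_div_lt_one_div_of_lt hr hrp)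
  calc (1 : ℝ) < (p + 1) / p := by rw [lt_div_iff₀ hp]; linarith
    _ = r * (1 + 1 / p) / (1 - r / p) * (1 / r - 1 / p) := hthreshold.symm
    _ < s * (1 / r - 1 / p) := mul_lt_mul_of_pos_right hs hθ

theorem random_sum_Lr_bound_general
    (p r s : ℝ) (hr1 : 1 ≤ r) (hrp : r < p)
    (hs : r * (1 + 1 / p) / (1 - r / p) < s) :
    ∃ C : ℝ, 0 < C ∧
      ∀ (α : Type) (mα : MeasurableSpace α) (μ : Measure α),
        IsProbabilityMeasure μ →
        ∀ (X : ℕ → α → ℝ) (N : α → ℕ) (M : ℝ),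
          (∀ j : ℕ, MemLp (X j) (ENNReal.ofReal p) μ) →
          (∀ j : ℕ, eLpNorm (X j) (ENNReal.ofReal p) μ ≤ ENNReal.ofReal M) →
          (∀ a, 1 ≤ N a) → Measurable N →
          MemLp (fun a => (N a : ℝ)) (ENNReal.ofReal s) μ →
          MemLp (fun a => ∑ j ∈ Finset.Icc 1 (N a), X j a) (ENNReal.ofReal r) μ ∧
          eLpNorm (fun a => ∑ j ∈ Finset.Icc 1 (N a), X j a) (ENNReal.ofReal r) μ
            ≤ ENNReal.ofReal
                (C * M * ((∫ a, (N a : ℝ) ^ s ∂μ) ^ (1 / s)) ^ (s * (1 / r - 1 / p))) := by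
  have hr : 0 < r := one_pos.trans_le hr1
  have hθ : 0 < 1 / r - 1 / p := sub_pos.mpr (one_div_lt_one_div_of_lt hr hrp)
  have hsθ := one_lt_mul_one_div_sub_one_div hr hrp hs
  have hs0 : 0 < s := pos_of_mul_pos_left (one_pos.trans hsθ) hθ.le
  set θ := 1 / r - 1 / p
  set C := ∑' j : ℕ, (j : ℝ) ^ (-(s * θ)) with hCdef
  have hC : 0 < C :=
    (Real.summable_nat_rpow.mpr (by linarith)).tsum_pos (fun j => by positivity) 1 (by simp)
  refine ⟨C, hC, ?_⟩
  intro α _ μ _ X N M hX hXM _ hN hNs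
  have hexp : (ENNReal.ofReal s).toReal *
      (1 / (ENNReal.ofReal r).toReal - 1 / (ENNReal.ofReal p).toReal) = s * θ := by
    rw [ENNReal.toReal_ofReal hs0.le, ENNReal.toReal_ofReal hr.le,
      ENNReal.toReal_ofReal (hr.trans hrp).le]
  have hB : eLpNorm (fun a => (N a : ℝ)) (ENNReal.ofReal s) μ =
      ENNReal.ofReal ((∫ a, (N a : ℝ) ^ s ∂μ) ^ (1 / s)) := by
    rw [hNs.eLpNorm_eq_integral_rpow_norm (by simpa using hs0) ENNReal.ofReal_ne_top]
    simp [ENNReal.toReal_ofReal hs0.le]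
  have hbound := eLpNorm_randomSum_le (by simpa using hr1) (fun j => (hX j).1) hN
    (sum_eLpNorm_indicator_ge_le (ENNReal.ofReal_le_ofReal hrp.le) (by simpa using hs0)
      ENNReal.ofReal_ne_top (fun j => (hX j).1) hXM hN (hexp ▸ hsθ))
  rw [hexp, hB, ENNReal.ofReal_rpow_of_nonneg (by positivity) (by positivity),
    ← hCdef, ← ENNReal.ofReal_mul (by positivity), ← ENNReal.ofReal_mul' (by positivity)] at hbound
  refine ⟨⟨AEStronglyMeasurable.randomSum (fun j => (hX j).1) hN,
    hbound.trans_lt ENNReal.ofReal_lt_top⟩, hbound.trans_eq (by ring_nf)⟩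

/-- Lemma 4.5: a random sum `Σ_{j=1}^N X_j` of `L^p`-bounded random
variables, with `N ∈ L^s` for `s > r(1 + 1/p)/(1 - r/p)`, lies in `L^r`, with the norm
bound `‖Σ_{j=1}^N X_j‖_r ≤ C (sup_j ‖X_j‖_p) ‖N‖_s^{s(1/r - 1/p)}`, where `C` depends
only on `p`, `r` and `s`. -/
theorem random_sum_Lr_bound
    (p r s : ℝ) (hp : 1 < p) (hr1 : 1 ≤ r) (hrp : r < p)
    (hs : r * (1 + 1 / p) / (1 - r / p) < s) :
    ∃ C : ℝ, 0 < C ∧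
      ∀ (α : Type) (mα : MeasurableSpace α) (μ : Measure α),
        IsProbabilityMeasure μ →
        ∀ (X : ℕ → α → ℝ) (N : α → ℕ) (M : ℝ),
          (∀ j : ℕ, MemLp (X j) (ENNReal.ofReal p) μ) →
          (∀ j : ℕ, eLpNorm (X j) (ENNReal.ofReal p) μ ≤ ENNReal.ofReal M) →
          (∀ a, 1 ≤ N a) → Measurable N →
          MemLp (fun a => (N a : ℝ)) (ENNReal.ofReal s) μ →
          MemLp (fun a => ∑ j ∈ Finset.Icc 1 (N a), X j a) (ENNReal.ofReal r) μ ∧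
          eLpNorm (fun a => ∑ j ∈ Finset.Icc 1 (N a), X j a) (ENNReal.ofReal r) μ
            ≤ ENNReal.ofReal
                (C * M * ((∫ a, (N a : ℝ) ^ s ∂μ) ^ (1 / s)) ^ (s * (1 / r - 1 / p))) :=
  random_sum_Lr_bound_general p r s hr1 hrp hs
end
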